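/- arXiv:2410.05042 — 7 statements merged into one kernel-verified Lean document; each statement's English description precedes it below -/
import Mathlib

section
/- Let u : ℝ≥0 → ℝ≥0 be nondecreasing, doubling and sublinear, let L ≥ 1, and let f : (X,x₀) → (Y,y₀) be an (L,u,x₀)-Lipschitz map between pointed metric spaces. Let (x_n) be a sequence in X and (σ_n) positive reals with σ_n → ∞ and u(|x_n|)/σ_n → 0. If a sequence (x'_n) in X satisfies d(x_n, x'_n) ≤ M·σ_n for all n and some constant M ≥ 0, then there exists a constant M' ≥ 0 such that d(f(x_n), f(x'_n)) ≤ M'·σ_n for all n. (That is, f maps the precone of X with data ((x_n),(σ_n)) into the precone of Y with data ((f(x_n)),(σ_n)).) -/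
/-!
Since `|x'ₙ| ≤ |xₙ| + c σₙ` with `c = max M 1`, monotonicity and doubling of `u` give
`u (max |xₙ| |x'ₙ|) ≤ C (u |xₙ| + u (c σₙ))`. Both terms are `o(σₙ)`: the first by admissibility,
the second by sublinearity of `u` as `σₙ → ∞`. A sequence that is `o(σₙ)` is bounded by a
multiple of `σₙ`, so the additive error of `f` is absorbed into the linear term.
-/

open Filter Topology

lemma apply_add_le_mul_add_of_doubling {u : ℝ → ℝ} {C a b : ℝ}
    (hu0 : ∀ r, 0 ≤ r → 0 ≤ u r) (humono : MonotoneOn u (Set.Ici 0)) (hC : 0 ≤ C)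
    (hdbl : ∀ r, 0 ≤ r → u (2 * r) ≤ C * u r) (ha : 0 ≤ a) (hb : 0 ≤ b) :
    u (a + b) ≤ C * (u a + u b) := by
  have hmax : 0 ≤ max a b := le_max_of_le_left ha
  have hmax_le : u (max a b) ≤ u a + u b := by
    rcases max_cases a b with ⟨h, _⟩ | ⟨h, _⟩ <;> rw [h]
    · linarith [hu0 b hb]
    · linarith [hu0 a ha]
  calc u (a + b) ≤ u (2 * max a b) :=
        humono (add_nonneg ha hb) (mul_nonneg zero_le_two hmax)
          (by linarith [le_max_left a b, le_max_right a b])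
    _ ≤ C * u (max a b) := hdbl _ hmax
    _ ≤ C * (u a + u b) := mul_le_mul_of_nonneg_left hmax_le hC

lemma tendsto_apply_mul_div_of_sublinear {ι : Type*} {l : Filter ι} {u : ℝ → ℝ} {σ : ι → ℝ}
    {c : ℝ} (husub : Tendsto (fun r => u r / r) atTop (𝓝 0)) (hc : 0 < c)
    (hσ : Tendsto σ l atTop) :
    Tendsto (fun i => u (c * σ i) / σ i) l (𝓝 0) := by
  have h := (husub.comp (hσ.const_mul_atTop hc)).const_mul c
  rw [mul_zero] at h
  refine h.congr' ?_
  filter_upwards [hσ.eventually_gt_atTop 0] with i hi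
  simp only [Function.comp_apply]
  field_simp

lemma exists_le_mul_of_tendsto_div {g σ : ℕ → ℝ} {a : ℝ}
    (h : Tendsto (fun n => g n / σ n) atTop (𝓝 a)) (hσ : ∀ n, 0 < σ n) :
    ∃ B, 0 ≤ B ∧ ∀ n, g n ≤ B * σ n := by
  obtain ⟨B, hB⟩ := h.bddAbove_range
  refine ⟨max B 0, le_max_right _ _, fun n => ?_⟩
  rw [← div_le_iff₀ (hσ n)]
  exact (hB (Set.mem_range_self n)).trans (le_max_left _ _)

lemma max_dist_le_dist_add {X : Type*} [PseudoMetricSpace X] {x x' x₀ : X} {r : ℝ}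
    (h : dist x x' ≤ r) : max (dist x x₀) (dist x' x₀) ≤ dist x x₀ + r := by
  have hr : 0 ≤ r := dist_nonneg.trans h
  refine max_le (le_add_of_nonneg_right hr) ?_
  linarith [dist_triangle x' x x₀, dist_comm x x']

theorem sbe_maps_precone_into_precone_general
    {X Y : Type*} [MetricSpace X] [MetricSpace Y]
    (u : ℝ → ℝ)
    (hu0 : ∀ r, 0 ≤ r → 0 ≤ u r)
    (humono : MonotoneOn u (Set.Ici 0))
    (hudbl : ∃ C, 1 ≤ C ∧ ∀ r, 0 ≤ r → u (2 * r) ≤ C * u r)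
    (husub : Tendsto (fun r => u r / r) atTop (𝓝 0))
    (L : ℝ) (hL : 1 ≤ L) (x₀ : X) (f : X → Y)
    (hf : ∀ x x', dist (f x) (f x') ≤ L * dist x x' + u (max (dist x x₀) (dist x' x₀)))
    (x : ℕ → X) (σ : ℕ → ℝ) (hσpos : ∀ n, 0 < σ n)
    (hσ : Tendsto σ atTop atTop)
    (hadm : Tendsto (fun n => u (dist (x n) x₀) / σ n) atTop (𝓝 0))
    (x' : ℕ → X) (M : ℝ)
    (hx' : ∀ n, dist (x n) (x' n) ≤ M * σ n) :
    ∃ M', 0 ≤ M' ∧ ∀ n, dist (f (x n)) (f (x' n)) ≤ M' * σ n := by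
  obtain ⟨C, hC, hdbl⟩ := hudbl
  have hL0 : 0 ≤ L := by linarith
  set c := max M 1
  have hc : 0 < c := lt_max_of_lt_right one_pos
  have hx'c n : dist (x n) (x' n) ≤ c * σ n :=
    (hx' n).trans (mul_le_mul_of_nonneg_right (le_max_left _ _) (hσpos n).le)
  have herr : Tendsto (fun n => C * (u (dist (x n) x₀) + u (c * σ n)) / σ n) atTop (𝓝 0) := by
    simpa [mul_div_assoc, add_div] using
      (hadm.add (tendsto_apply_mul_div_of_sublinear husub hc hσ)).const_mul C
  obtain ⟨B, hB, hBσ⟩ := exists_le_mul_of_tendsto_div herr hσpos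
  refine ⟨L * c + B, add_nonneg (mul_nonneg hL0 hc.le) hB, fun n => ?_⟩
  have hcσ : 0 ≤ c * σ n := mul_nonneg hc.le (hσpos n).le
  calc dist (f (x n)) (f (x' n))
      ≤ L * dist (x n) (x' n) + u (max (dist (x n) x₀) (dist (x' n) x₀)) := hf _ _
    _ ≤ L * (c * σ n) + u (dist (x n) x₀ + c * σ n) :=
        add_le_add (mul_le_mul_of_nonneg_left (hx'c n) hL0)
          (humono (le_max_of_le_left dist_nonneg) (add_nonneg dist_nonneg hcσ)
            (max_dist_le_dist_add (hx'c n)))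
    _ ≤ L * (c * σ n) + B * σ n := by
        gcongr
        exact (apply_add_le_mul_add_of_doubling hu0 humono (by linarith) hdbl dist_nonneg hcσ).trans
          (hBσ n)
    _ = (L * c + B) * σ n := by ring

/-- An `(L,u,x₀)`-Lipschitz map sends the precone of `X` with data
`((xₙ), (σₙ))` into the precone of `Y` with data `((f xₙ), (σₙ))`, provided the
cone data is `u`-admissible. -/
theorem sbe_maps_precone_into_precone
    {X Y : Type*} [MetricSpace X] [MetricSpace Y]
    (u : ℝ → ℝ)
    (hu0 : ∀ r, 0 ≤ r → 0 ≤ u r)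
    (humono : MonotoneOn u (Set.Ici 0))
    (hudbl : ∃ C, 1 ≤ C ∧ ∀ r, 0 ≤ r → u (2 * r) ≤ C * u r)
    (husub : Tendsto (fun r => u r / r) atTop (𝓝 0))
    (L : ℝ) (hL : 1 ≤ L) (x₀ : X) (y₀ : Y) (f : X → Y)
    (hf : ∀ x x', dist (f x) (f x') ≤ L * dist x x' + u (max (dist x x₀) (dist x' x₀)))
    (x : ℕ → X) (σ : ℕ → ℝ) (hσpos : ∀ n, 0 < σ n)
    (hσ : Tendsto σ atTop atTop)
    (hadm : Tendsto (fun n => u (dist (x n) x₀) / σ n) atTop (𝓝 0))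
    (x' : ℕ → X) (M : ℝ) (hM : 0 ≤ M)
    (hx' : ∀ n, dist (x n) (x' n) ≤ M * σ n) :
    ∃ M', 0 ≤ M' ∧ ∀ n, dist (f (x n)) (f (x' n)) ≤ M' * σ n :=
  sbe_maps_precone_into_precone_general u hu0 humono hudbl husub L hL x₀ f hf x σ hσpos hσ hadm x' M
    hx'
end

section
/- Let X = X₁ × X̂ and Y = Y₁ × Ŷ be ℓ²-products of pointed metric spaces with basepoints (o₁, ô) and (p₁, p̂), let u : ℝ≥0 → ℝ≥0 be nondecreasing, let d₀ : ℝ≥0 → ℝ≥0 be nondecreasing and subadditive, let L, L₁ ≥ 1, and let φ : X → Y be (L,u,(o₁,ô))-Lipschitz. Assume that every 1-horizontal pair x = (z,x̂), x' = (z',x̂) in X with d(z,z') ≥ d₀(max(|x|,|x'|)) satisfies the uncompressed lower bound L₁⁻¹·d(z,z') ≤ d(π₁(φ x), π₁(φ x')). Then for every x̂ ∈ X̂, the map φ_x̂ : X₁ → Y₁ defined by φ_x̂(z) = π₁(φ(z,x̂)) satisfies, for all z, z' ∈ X₁: L₁⁻¹·d(z,z') − d₀(max(|z|,|z'|)) −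 d₀(|x̂|) ≤ d(φ_x̂(z), φ_x̂(z')) ≤ L·d(z,z') + u(max(|z|,|z'|) + |x̂|), where |z| = d(z,o₁) and |x̂| = d(x̂,ô). In particular each φ_x̂ is a sublinear bilipschitz embedding with error function in the class of u + d₀ plus a constant depending on |x̂|. -/
open Filter Topology

/-- The ℓ²-product pairing map. -/
noncomputable def l2mk {A B : Type*} (a : A) (b : B) : WithLp 2 (A × B) :=
  (WithLp.equiv 2 (A × B)).symm (a, b)

/-- Projection onto the first factor of an ℓ²-product. -/
noncomputable def l2fst {A B : Type*} (x : WithLp 2 (A × B)) : A :=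
  (WithLp.equiv 2 (A × B) x).1


lemma l2_dist_mk {A B : Type*} [MetricSpace A] [MetricSpace B] (a a' : A) (b b' : B) :
    dist (l2mk a b) (l2mk a' b') = Real.sqrt (dist a a' ^ 2 + dist b b' ^ 2) := by
  have h := WithLp.prod_dist_eq_add (p := 2) (α := A) (β := B) (by norm_num)
    (l2mk a b) (l2mk a' b')
  rw [show ((l2mk a b).fst) = a from rfl, show ((l2mk a' b').fst) = a' from rfl,
    show ((l2mk a b).snd) = b from rfl, show ((l2mk a' b').snd) = b' from rfl] at h
  rw [h]
  norm_num
  rw [Real.sqrt_eq_rpow]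

lemma l2_dist_mk_same {A B : Type*} [MetricSpace A] [MetricSpace B] (a a' : A) (b : B) :
    dist (l2mk a b) (l2mk a' b) = dist a a' := by
  rw [l2_dist_mk]
  simp [Real.sqrt_sq dist_nonneg]

lemma sqrt_sq_add_sq_le {a b : ℝ} (ha : 0 ≤ a) (hb : 0 ≤ b) :
    Real.sqrt (a ^ 2 + b ^ 2) ≤ a + b := by
  rw [show a + b = Real.sqrt ((a + b) ^ 2) by rw [Real.sqrt_sq (by linarith)]]
  apply Real.sqrt_le_sqrt; nlinarith

/-- If `φ : X₁ × X̂ → Y₁ × Ŷ` is `(L,u)`-Lipschitz and all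
`d₀`-separated 1-horizontal pairs are uncompressed, then for each `x̂ ∈ X̂` the
map `φ_x̂ = π₁ ∘ φ(·, x̂) : X₁ → Y₁` is a sublinear bilipschitz embedding, with
the stated explicit bounds. -/
theorem horizontal_restriction_is_sbe
    {X₁ Xh Y₁ Yh : Type*} [MetricSpace X₁] [MetricSpace Xh]
    [MetricSpace Y₁] [MetricSpace Yh]
    (o₁ : X₁) (oh : Xh) (p₁ : Y₁) (ph : Yh)
    (u d₀ : ℝ → ℝ)
    (humono : MonotoneOn u (Set.Ici 0))
    (hd₀0 : ∀ r, 0 ≤ r → 0 ≤ d₀ r)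
    (hd₀mono : MonotoneOn d₀ (Set.Ici 0))
    (hd₀sub : ∀ r s, 0 ≤ r → 0 ≤ s → d₀ (r + s) ≤ d₀ r + d₀ s)
    (L L₁ : ℝ) (hL : 1 ≤ L) (hL₁ : 1 ≤ L₁)
    (φ : WithLp 2 (X₁ × Xh) → WithLp 2 (Y₁ × Yh))
    (hφ : ∀ x x' : WithLp 2 (X₁ × Xh),
      dist (φ x) (φ x') ≤ L * dist x x' +
        u (max (dist x (l2mk o₁ oh)) (dist x' (l2mk o₁ oh))))
    (hunc : ∀ (z z' : X₁) (xh : Xh),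
      d₀ (max (dist (l2mk z xh) (l2mk o₁ oh)) (dist (l2mk z' xh) (l2mk o₁ oh)))
          ≤ dist z z' →
      L₁⁻¹ * dist z z' ≤ dist (l2fst (φ (l2mk z xh))) (l2fst (φ (l2mk z' xh)))) :
    ∀ (xh : Xh) (z z' : X₁),
      (L₁⁻¹ * dist z z' - d₀ (max (dist z o₁) (dist z' o₁)) - d₀ (dist xh oh)
          ≤ dist (l2fst (φ (l2mk z xh))) (l2fst (φ (l2mk z' xh))))
      ∧ dist (l2fst (φ (l2mk z xh))) (l2fst (φ (l2mk z' xh)))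
          ≤ L * dist z z' + u (max (dist z o₁) (dist z' o₁) + dist xh oh) := by
  intro xh z z'
  have hdm : dist (l2mk z xh) (l2mk z' xh) = dist z z' := l2_dist_mk_same z z' xh
  set M : ℝ := max (dist z o₁) (dist z' o₁) with hM
  have hM0 : 0 ≤ M := le_trans dist_nonneg (le_max_left _ _)
  have hxh0 : (0:ℝ) ≤ dist xh oh := dist_nonneg
  -- bound on max of norms
  have hz : dist (l2mk z xh) (l2mk o₁ oh) = Real.sqrt (dist z o₁ ^ 2 + dist xh oh ^ 2) :=
    l2_dist_mk _ _ _ _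
  have hz' : dist (l2mk z' xh) (l2mk o₁ oh) = Real.sqrt (dist z' o₁ ^ 2 + dist xh oh ^ 2) :=
    l2_dist_mk _ _ _ _
  have hmaxle : max (dist (l2mk z xh) (l2mk o₁ oh)) (dist (l2mk z' xh) (l2mk o₁ oh))
      ≤ M + dist xh oh := by
    rw [hz, hz']
    apply max_le
    · exact le_trans (sqrt_sq_add_sq_le dist_nonneg hxh0)
        (by have := le_max_left (dist z o₁) (dist z' o₁); linarith)
    · exact le_trans (sqrt_sq_add_sq_le dist_nonneg hxh0)
        (by have := le_max_right (dist z o₁) (dist z' o₁); linarith)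
  have hmax0 : (0:ℝ) ≤ max (dist (l2mk z xh) (l2mk o₁ oh)) (dist (l2mk z' xh) (l2mk o₁ oh)) :=
    le_trans dist_nonneg (le_max_left _ _)
  have hfstlip : ∀ x y : WithLp 2 (Y₁ × Yh), dist (l2fst x) (l2fst y) ≤ dist x y := by
    intro x y
    have h := WithLp.prod_dist_eq_add (p := 2) (α := Y₁) (β := Yh) (by norm_num) x y
    rw [h, show ((2:ENNReal).toReal) = (2:ℝ) by norm_num]
    have h1 : ((dist x.fst y.fst ^ (2:ℝ) + dist x.snd y.snd ^ (2:ℝ)) ^ ((1:ℝ)/2))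
        = Real.sqrt (dist x.fst y.fst ^ 2 + dist x.snd y.snd ^ 2) := by
      rw [Real.sqrt_eq_rpow]
      congr 1
      rw [Real.rpow_two, Real.rpow_two]
    rw [h1]
    have h0 : dist (l2fst x) (l2fst y) = Real.sqrt (dist x.fst y.fst ^ 2) := by
      rw [Real.sqrt_sq dist_nonneg]; rfl
    rw [h0]
    apply Real.sqrt_le_sqrt; nlinarith [sq_nonneg (dist x.snd y.snd)]
  constructor
  · -- lower bound
    by_cases hc : d₀ (max (dist (l2mk z xh) (l2mk o₁ oh)) (dist (l2mk z' xh) (l2mk o₁ oh)))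
        ≤ dist z z'
    · have := hunc z z' xh hc
      have h1 : 0 ≤ d₀ M := hd₀0 M hM0
      have h2 : 0 ≤ d₀ (dist xh oh) := hd₀0 _ hxh0
      linarith
    · push_neg at hc
      have hsub : d₀ (M + dist xh oh) ≤ d₀ M + d₀ (dist xh oh) := hd₀sub M _ hM0 hxh0
      have hmono : d₀ (max (dist (l2mk z xh) (l2mk o₁ oh)) (dist (l2mk z' xh) (l2mk o₁ oh)))
          ≤ d₀ (M + dist xh oh) := hd₀mono hmax0 (Set.mem_Ici.mpr (add_nonneg hM0 hxh0)) hmaxle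
      have hL₁inv : L₁⁻¹ * dist z z' ≤ dist z z' := by
        have : L₁⁻¹ ≤ 1 := inv_le_one_of_one_le₀ hL₁
        nlinarith [dist_nonneg (x := z) (y := z')]
      have := hfstlip (φ (l2mk z xh)) (φ (l2mk z' xh))
      have hd0 : (0:ℝ) ≤ dist (l2fst (φ (l2mk z xh))) (l2fst (φ (l2mk z' xh))) := dist_nonneg
      linarith
  · -- upper bound
    have h1 := hφ (l2mk z xh) (l2mk z' xh)
    have h2 := hfstlip (φ (l2mk z xh)) (φ (l2mk z' xh))
    have humax : u (max (dist (l2mk z xh) (l2mk o₁ oh)) (dist (l2mk z' xh) (l2mk o₁ oh)))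
        ≤ u (M + dist xh oh) := humono hmax0 (Set.mem_Ici.mpr (add_nonneg hM0 hxh0)) hmaxle
    rw [hdm] at h1
    linarith
end

section
/- Let X̄, Z, Ȳ, W be pointed metric spaces, let X = X̄ × Z and Y = Ȳ × W be their ℓ²-products, let u, v : ℝ≥0 → ℝ≥0, let L ≥ 1 and c ≥ 0, and let φ : X → Y be (L, c·u, x₀)-Lipschitz and (L, c·u, x₀)-expansive, where x₀ is the basepoint of X. Assume that for all x̄₁, x̄₂ ∈ X̄ and z ∈ Z, the W-coordinates satisfy d_W(π_W(φ(x̄₁,z)), π_W(φ(x̄₂,z))) ≤ v(max(|(x̄₁,z)|, |(x̄₂,z)|)). Then for every z ∈ Z the map φ_z : X̄ → Ȳ given by φ_z(x̄) = π_Ȳ(φ(x̄,z)) satisfies, for all x̄₁, x̄₂ ∈ X̄: L⁻¹·d(x̄₁,x̄₂) − c·u(max(|(x̄₁,z)|,|(x̄₂,z)|)) − v(max(|(x̄₁,z)|,|(x̄₂,z)|)) ≤ d(φ_z(x̄₁), φ_z(x̄₂)) ≤ L·d(x̄₁,x̄₂) + c·u(max(|(x̄₁,z)|,|(x̄₂,z)|)).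 -/
open Filter Topology

/-- Projection onto the second factor of an ℓ²-product. -/
noncomputable def l2snd {A B : Type*} (x : WithLp 2 (A × B)) : B :=
  (WithLp.equiv 2 (A × B) x).2

section aux

variable {A B : Type*} [MetricSpace A] [MetricSpace B]

lemma l2dist_eq (x y : WithLp 2 (A × B)) :
    dist x y = Real.sqrt (dist (l2fst x) (l2fst y) ^ 2 + dist (l2snd x) (l2snd y) ^ 2) := by
  have h := WithLp.prod_dist_eq_add (p := 2) (by norm_num) x y
  rw [h]
  rw [Real.sqrt_eq_rpow]
  norm_num
  rfl

lemma l2dist_fst_le (x y : WithLp 2 (A × B)) :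
    dist (l2fst x) (l2fst y) ≤ dist x y := by
  rw [l2dist_eq]
  refine le_trans ?_ (Real.sqrt_le_sqrt (le_add_of_nonneg_right (by positivity) : dist (l2fst x) (l2fst y) ^ 2 ≤ _))
  rw [Real.sqrt_sq dist_nonneg]

lemma l2dist_le (x y : WithLp 2 (A × B)) :
    dist x y ≤ dist (l2fst x) (l2fst y) + dist (l2snd x) (l2snd y) := by
  rw [l2dist_eq]
  have h := Real.sqrt_le_sqrt (show dist (l2fst x) (l2fst y) ^ 2 + dist (l2snd x) (l2snd y) ^ 2
      ≤ (dist (l2fst x) (l2fst y) + dist (l2snd x) (l2snd y)) ^ 2 by nlinarith [dist_nonneg (x := l2fst x) (y := l2fst y), dist_nonneg (x := l2snd x) (y := l2snd y)])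
  rwa [Real.sqrt_sq (by positivity)] at h

lemma l2dist_mk_same (a b : A) (z : B) :
    dist (l2mk a z) (l2mk b z) = dist a b := by
  rw [l2dist_eq]
  have : l2fst (l2mk a z) = a := rfl
  simp [l2mk, l2fst, l2snd, Real.sqrt_sq dist_nonneg]

end aux

/-- If `φ : X̄ × Z → Ȳ × W` is an `(L, c·u)`-bilipschitz embedding
whose `W`-coordinate is controlled by `v` along `Z`-horizontal pairs, then for
each `z ∈ Z` the map `φ_z = π_Ȳ ∘ φ(·, z) : X̄ → Ȳ` satisfies the stated
two-sided bounds. -/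
theorem euclidean_factor_restriction_bounds
    {Xb Z Yb W : Type*} [MetricSpace Xb] [MetricSpace Z]
    [MetricSpace Yb] [MetricSpace W]
    (ob : Xb) (oZ : Z)
    (u v : ℝ → ℝ) (L c : ℝ) (hL : 1 ≤ L) (hc : 0 ≤ c)
    (φ : WithLp 2 (Xb × Z) → WithLp 2 (Yb × W))
    (hφlip : ∀ x x' : WithLp 2 (Xb × Z),
      dist (φ x) (φ x') ≤ L * dist x x' +
        c * u (max (dist x (l2mk ob oZ)) (dist x' (l2mk ob oZ))))
    (hφexp : ∀ x x' : WithLp 2 (Xb × Z),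
      L⁻¹ * dist x x' - c * u (max (dist x (l2mk ob oZ)) (dist x' (l2mk ob oZ)))
        ≤ dist (φ x) (φ x'))
    (hW : ∀ (x₁ x₂ : Xb) (z : Z),
      dist (l2snd (φ (l2mk x₁ z))) (l2snd (φ (l2mk x₂ z)))
        ≤ v (max (dist (l2mk x₁ z) (l2mk ob oZ)) (dist (l2mk x₂ z) (l2mk ob oZ)))) :
    ∀ (z : Z) (x₁ x₂ : Xb),
      (L⁻¹ * dist x₁ x₂
          - c * u (max (dist (l2mk x₁ z) (l2mk ob oZ)) (dist (l2mk x₂ z) (l2mk ob oZ)))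
          - v (max (dist (l2mk x₁ z) (l2mk ob oZ)) (dist (l2mk x₂ z) (l2mk ob oZ)))
        ≤ dist (l2fst (φ (l2mk x₁ z))) (l2fst (φ (l2mk x₂ z))))
      ∧ dist (l2fst (φ (l2mk x₁ z))) (l2fst (φ (l2mk x₂ z)))
          ≤ L * dist x₁ x₂
            + c * u (max (dist (l2mk x₁ z) (l2mk ob oZ)) (dist (l2mk x₂ z) (l2mk ob oZ))) := by
  intro z x₁ x₂
  have hmk := l2dist_mk_same x₁ x₂ z
  constructor
  · have h1 := hφexp (l2mk x₁ z) (l2mk x₂ z)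
    have h2 := l2dist_le (φ (l2mk x₁ z)) (φ (l2mk x₂ z))
    have h3 := hW x₁ x₂ z
    rw [hmk] at h1
    linarith
  · have h1 := hφlip (l2mk x₁ z) (l2mk x₂ z)
    have h2 := l2dist_fst_le (φ (l2mk x₁ z)) (φ (l2mk x₂ z))
    rw [hmk] at h1
    linarith
end

section
/- Let u : ℝ≥0 → ℝ≥0 be nondecreasing and sublinear, let L ≥ 1, and let f : (X,x₀) → Y be a map from a pointed metric space to a metric space that is both (L,u,x₀)-Lipschitz and (L,u,x₀)-expansive. Then for every L' > L there exists R ≥ 0 such that for all x ∈ X with max(d(x,x₀), d(f x, f x₀)) ≥ R, one has (1/L')·d(x,x₀) ≤ d(f x, f x₀) ≤ L'·d(x,x₀). (In particular, sizes of points and their images under a sublinear bilipschitz embedding are comparable, up to any factor L' > L, outside a bounded set.) -/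
open Filter Topology

/-- For a sublinear bilipschitz embedding `f`, the sizes of points
and of their images are comparable up to any factor `L' > L` outside a bounded
set. -/
theorem sbe_sizes_comparable
    {X Y : Type*} [MetricSpace X] [MetricSpace Y]
    (u : ℝ → ℝ)
    (hu0 : ∀ r, 0 ≤ r → 0 ≤ u r)
    (humono : MonotoneOn u (Set.Ici 0))
    (husub : Tendsto (fun r => u r / r) atTop (𝓝 0))
    (L : ℝ) (hL : 1 ≤ L) (x₀ : X) (f : X → Y)
    (hf : ∀ x x', dist (f x) (f x') ≤ L * dist x x' + u (max (dist x x₀) (dist x' x₀)))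
    (hfe : ∀ x x', L⁻¹ * dist x x' - u (max (dist x x₀) (dist x' x₀)) ≤ dist (f x) (f x')) :
    ∀ L' : ℝ, L < L' → ∃ R : ℝ, 0 ≤ R ∧ ∀ x : X,
      R ≤ max (dist x x₀) (dist (f x) (f x₀)) →
      (1 / L') * dist x x₀ ≤ dist (f x) (f x₀) ∧ dist (f x) (f x₀) ≤ L' * dist x x₀ := by
  intro L' hL'
  have hLpos : (0:ℝ) < L := lt_of_lt_of_le one_pos hL
  have hL'pos : (0:ℝ) < L' := hLpos.trans hL'
  have hinv : L'⁻¹ < L⁻¹ := by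
    exact inv_strictAnti₀ hLpos hL'
  set ε : ℝ := min (L' - L) (L⁻¹ - L'⁻¹) with hε_def
  have hε : 0 < ε := lt_min (by linarith) (by linarith)
  have hev : ∀ᶠ r in atTop, u r / r < ε := husub.eventually (eventually_lt_nhds hε)
  obtain ⟨N, hN⟩ := eventually_atTop.1 hev
  set R₁ : ℝ := max N 1 with hR₁def
  have hR₁pos : (0:ℝ) < R₁ := lt_of_lt_of_le one_pos (le_max_right _ _)
  have hu_small : ∀ r, R₁ ≤ r → u r ≤ ε * r := by
    intro r hr
    have hrpos : 0 < r := hR₁pos.trans_le hr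
    have := hN r (le_trans (le_max_left _ _) hr)
    calc u r = u r / r * r := by field_simp
    _ ≤ ε * r := mul_le_mul_of_nonneg_right this.le hrpos.le
  set R : ℝ := max R₁ (L * R₁ + u R₁) + 1 with hRdef
  refine ⟨R, by nlinarith [le_max_left R₁ (L * R₁ + u R₁), hR₁pos], ?_⟩
  intro x hx
  -- First show R₁ ≤ dist x x₀
  have hfx : dist (f x) (f x₀) ≤ L * dist x x₀ + u (dist x x₀) := by
    have := hf x x₀
    simpa [max_eq_left dist_nonneg] using this
  have hfe' : L⁻¹ * dist x x₀ - u (dist x x₀) ≤ dist (f x) (f x₀) := by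
    have := hfe x x₀
    simpa [max_eq_left dist_nonneg] using this
  have hxR₁ : R₁ ≤ dist x x₀ := by
    by_contra h
    push_neg at h
    have hu1 : u (dist x x₀) ≤ u R₁ :=
      humono (Set.mem_Ici.2 dist_nonneg) (Set.mem_Ici.2 hR₁pos.le) h.le
    have h1 : dist (f x) (f x₀) ≤ L * R₁ + u R₁ := by
      nlinarith [dist_nonneg (x := x) (y := x₀)]
    have h2 : dist x x₀ < R := by
      calc dist x x₀ < R₁ := h
      _ ≤ R := by nlinarith [le_max_left R₁ (L * R₁ + u R₁)]
    have h3 : dist (f x) (f x₀) < R := by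
      calc dist (f x) (f x₀) ≤ L * R₁ + u R₁ := h1
      _ < R := by nlinarith [le_max_right R₁ (L * R₁ + u R₁)]
    have := max_lt h2 h3
    linarith [hx]
  have hus : u (dist x x₀) ≤ ε * dist x x₀ := hu_small _ hxR₁
  have hε1 : ε ≤ L' - L := min_le_left _ _
  have hε2 : ε ≤ L⁻¹ - L'⁻¹ := min_le_right _ _
  have hdnn : (0:ℝ) ≤ dist x x₀ := dist_nonneg
  constructor
  · have : L'⁻¹ * dist x x₀ ≤ dist (f x) (f x₀) := by nlinarith
    simpa [one_div] using this
  · nlinarith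
end

section
/- Let u : ℝ≥0 → ℝ≥0 be nondecreasing, doubling, sublinear and satisfy u(r) ≥ 1 for all r. Let (X,x₀), (Y,y₀), (Z,z₀) be pointed metric spaces with y₀ = f(x₀) and z₀ = g(y₀). Suppose f : X → Y is (L₁, c₁·u, x₀)-Lipschitz, (L₁, c₁·u, x₀)-expansive and (c₁·u, y₀)-surjective, and g : Y → Z is (L₂, c₂·u, y₀)-Lipschitz, (L₂, c₂·u, y₀)-expansive and (c₂·u, z₀)-surjective, where L₁, L₂ ≥ 1 and c₁, c₂ ≥ 0. Then there exists c₃ ≥ 0 such that the composition g ∘ f : X → Z is (L₁L₂, c₃·u, x₀)-Lipschitz, (L₁L₂, c₃·u, x₀)-expansive, and (c₃·u, z₀)-surjective. (Compositions of O(u)-bilipschitz equivalences are O(u)-bilipschitz equivalences.) -/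
open Filter Topology

set_option maxHeartbeats 2000000 in
/-- The composition of two `O(u)`-bilipschitz equivalences,
with multiplicative constants `L₁` and `L₂`, is an `O(u)`-bilipschitz
equivalence with multiplicative constant `L₁·L₂`. -/
theorem sbe_comp
    {X Y Z : Type*} [MetricSpace X] [MetricSpace Y] [MetricSpace Z]
    (u : ℝ → ℝ)
    (humono : MonotoneOn u (Set.Ici 0))
    (hudbl : ∃ C, 1 ≤ C ∧ ∀ r, 0 ≤ r → u (2 * r) ≤ C * u r)
    (husub : Tendsto (fun r => u r / r) atTop (𝓝 0))
    (hu1 : ∀ r, 0 ≤ r → 1 ≤ u r)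
    (x₀ : X) (y₀ : Y) (z₀ : Z) (f : X → Y) (g : Y → Z)
    (hy₀ : y₀ = f x₀) (hz₀ : z₀ = g y₀)
    (L₁ L₂ c₁ c₂ : ℝ) (hL₁ : 1 ≤ L₁) (hL₂ : 1 ≤ L₂) (hc₁ : 0 ≤ c₁) (hc₂ : 0 ≤ c₂)
    (hflip : ∀ x x', dist (f x) (f x')
      ≤ L₁ * dist x x' + c₁ * u (max (dist x x₀) (dist x' x₀)))
    (hfexp : ∀ x x', L₁⁻¹ * dist x x' - c₁ * u (max (dist x x₀) (dist x' x₀))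
      ≤ dist (f x) (f x'))
    (hfsurj : ∀ y : Y, ∃ x : X, dist y (f x) ≤ c₁ * u (dist y y₀))
    (hglip : ∀ y y', dist (g y) (g y')
      ≤ L₂ * dist y y' + c₂ * u (max (dist y y₀) (dist y' y₀)))
    (hgexp : ∀ y y', L₂⁻¹ * dist y y' - c₂ * u (max (dist y y₀) (dist y' y₀))
      ≤ dist (g y) (g y'))
    (hgsurj : ∀ z : Z, ∃ y : Y, dist z (g y) ≤ c₂ * u (dist z z₀)) :
    ∃ c₃ : ℝ, 0 ≤ c₃ ∧
      (∀ x x', dist (g (f x)) (g (f x'))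
        ≤ (L₁ * L₂) * dist x x' + c₃ * u (max (dist x x₀) (dist x' x₀))) ∧
      (∀ x x', (L₁ * L₂)⁻¹ * dist x x' - c₃ * u (max (dist x x₀) (dist x' x₀))
        ≤ dist (g (f x)) (g (f x'))) ∧
      (∀ z : Z, ∃ x : X, dist z (g (f x)) ≤ c₃ * u (dist z z₀)) := by
  obtain ⟨C, hC1, hCdbl⟩ := hudbl
  have hC0 : (0:ℝ) ≤ C := le_trans zero_le_one hC1
  have hu0 : ∀ r, 0 ≤ r → 0 ≤ u r := fun r hr => le_trans zero_le_one (hu1 r hr)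
  have hL₁0 : (0:ℝ) < L₁ := lt_of_lt_of_le one_pos hL₁
  have hL₂0 : (0:ℝ) < L₂ := lt_of_lt_of_le one_pos hL₂
  -- sublinearity in a convenient form
  have hsub : ∀ K : ℝ, 0 < K → ∃ R : ℝ, 1 ≤ R ∧ ∀ r, R ≤ r → K * u r ≤ r := by
    intro K hK
    have hev : ∀ᶠ r in atTop, u r / r < K⁻¹ :=
      husub.eventually_lt_const (by positivity)
    obtain ⟨R₀, hR₀⟩ := eventually_atTop.1 hev
    refine ⟨max R₀ 1, le_max_right _ _, fun r hr => ?_⟩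
    have hr1 : (1:ℝ) ≤ r := le_trans (le_max_right _ _) hr
    have hr0 : (0:ℝ) < r := lt_of_lt_of_le one_pos hr1
    have h := hR₀ r (le_trans (le_max_left _ _) hr)
    rw [div_lt_iff₀ hr0] at h
    have : u r ≤ K⁻¹ * r := le_of_lt h
    calc K * u r ≤ K * (K⁻¹ * r) := mul_le_mul_of_nonneg_left this hK.le
      _ = r := by field_simp
  -- iterated doubling
  have hdblpow : ∀ n : ℕ, ∀ r : ℝ, 0 ≤ r → u (2 ^ n * r) ≤ C ^ n * u r := by
    intro n
    induction n with
    | zero => intro r hr; simp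
    | succ n ih =>
      intro r hr
      have h1 : (2:ℝ) ^ (n+1) * r = 2 * (2 ^ n * r) := by ring
      rw [h1]
      calc u (2 * (2 ^ n * r)) ≤ C * u (2 ^ n * r) := hCdbl _ (by positivity)
        _ ≤ C * (C ^ n * u r) := mul_le_mul_of_nonneg_left (ih r hr) hC0
        _ = C ^ (n+1) * u r := by ring
  -- key lemma: u (A r + B u r)-type quantities are O(u r)
  have key : ∀ A B : ℝ, 0 ≤ A → 0 ≤ B → ∃ K : ℝ, 0 ≤ K ∧
      ∀ r s : ℝ, 0 ≤ r → 0 ≤ s → s ≤ A * r + B * u r → u s ≤ K * u r := by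
    intro A B hA hB
    obtain ⟨R, hR1, hR⟩ := hsub 1 one_pos
    obtain ⟨n, hn⟩ := pow_unbounded_of_one_lt (A + B) (one_lt_two (α := ℝ))
    have hR0 : (0:ℝ) ≤ R := le_trans zero_le_one hR1
    set M := A * R + B * u R with hM
    have huR0 : 0 ≤ u R := hu0 R hR0
    have hM0 : 0 ≤ M := by positivity
    refine ⟨max (C ^ n) (u M), le_trans (by positivity) (le_max_left _ _), ?_⟩
    intro r s hr hs hsle
    have hur0 : 0 ≤ u r := hu0 r hr
    by_cases hrR : R ≤ r
    · have hur : u r ≤ r := by have := hR r hrR; linarith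
      have h2 : s ≤ 2 ^ n * r := by
        have h3 : s ≤ (A + B) * r := by nlinarith
        calc s ≤ (A + B) * r := h3
          _ ≤ 2 ^ n * r := mul_le_mul_of_nonneg_right hn.le hr
      calc u s ≤ u (2 ^ n * r) :=
            humono (Set.mem_Ici.2 hs) (Set.mem_Ici.2 (by positivity)) h2
        _ ≤ C ^ n * u r := hdblpow n r hr
        _ ≤ max (C ^ n) (u M) * u r :=
            mul_le_mul_of_nonneg_right (le_max_left _ _) hur0
    · have hrR' : r ≤ R := le_of_not_ge hrR
      have hur : u r ≤ u R := humono (Set.mem_Ici.2 hr) (Set.mem_Ici.2 hR0) hrR'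
      have h2 : s ≤ M := by nlinarith
      have h3 : u s ≤ u M := humono (Set.mem_Ici.2 hs) (Set.mem_Ici.2 hM0) h2
      have h4 : u M ≤ u M * u r := le_mul_of_one_le_right (hu0 M hM0) (hu1 r hr)
      calc u s ≤ u M * u r := le_trans h3 h4
        _ ≤ max (C ^ n) (u M) * u r :=
            mul_le_mul_of_nonneg_right (le_max_right _ _) hur0
  -- size bound on f x
  have hfsize : ∀ x : X, dist (f x) y₀ ≤ L₁ * dist x x₀ + c₁ * u (dist x x₀) := by
    intro x
    have h := hflip x x₀
    rw [dist_self] at h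
    rw [max_eq_left dist_nonneg] at h
    rw [hy₀]
    exact h
  obtain ⟨K₁, hK₁0, hK₁⟩ := key L₁ c₁ hL₁0.le hc₁
  -- bound on u (max |f x| |f x'|)
  have hmaxf : ∀ x x' : X,
      u (max (dist (f x) y₀) (dist (f x') y₀))
        ≤ K₁ * u (max (dist x x₀) (dist x' x₀)) := by
    intro x x'
    set r := max (dist x x₀) (dist x' x₀) with hrdef
    have hr0 : 0 ≤ r := le_trans dist_nonneg (le_max_left _ _)
    have hbound : ∀ a : X, dist a x₀ ≤ r → dist (f a) y₀ ≤ L₁ * r + c₁ * u r := by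
      intro a ha
      have h1 := hfsize a
      have h2 : u (dist a x₀) ≤ u r :=
        humono (Set.mem_Ici.2 dist_nonneg) (Set.mem_Ici.2 hr0) ha
      nlinarith
    have hmax : max (dist (f x) y₀) (dist (f x') y₀) ≤ L₁ * r + c₁ * u r :=
      max_le (hbound x (le_max_left _ _)) (hbound x' (le_max_right _ _))
    exact hK₁ r _ hr0 (le_trans dist_nonneg (le_max_left _ _)) hmax
  -- surjectivity preparation
  obtain ⟨R, hR1, hR⟩ := hsub (2 * L₂ * (c₂ + 1)) (by positivity)
  have hR0 : (0:ℝ) ≤ R := le_trans zero_le_one hR1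
  obtain ⟨K₂, hK₂0, hK₂⟩ := key (2 * L₂) (2 * L₂ * c₂ + R) (by positivity) (by positivity)
  obtain ⟨K₃, hK₃0, hK₃⟩ :=
    key (2 * L₂) (2 * L₂ * c₂ + R + c₁ * K₂) (by positivity) (by positivity)
  refine ⟨(L₂ * c₁ + c₂ * K₁) + (c₂ + L₂ * c₁ * K₂ + c₂ * K₃),
    by positivity, ?_, ?_, ?_⟩
  · -- Lipschitz
    intro x x'
    have h1 := hglip (f x) (f x')
    have h2 := hflip x x'
    have h3 := hmaxf x x'
    set r := max (dist x x₀) (dist x' x₀) with hrdef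
    have hr0 : 0 ≤ r := le_trans dist_nonneg (le_max_left _ _)
    have hur0 : 0 ≤ u r := hu0 r hr0
    have hA : L₂ * dist (f x) (f x') ≤ L₂ * (L₁ * dist x x' + c₁ * u r) :=
      mul_le_mul_of_nonneg_left h2 hL₂0.le
    have hB : c₂ * u (max (dist (f x) y₀) (dist (f x') y₀)) ≤ c₂ * (K₁ * u r) :=
      mul_le_mul_of_nonneg_left h3 hc₂
    have hextra : 0 ≤ (c₂ + L₂ * c₁ * K₂ + c₂ * K₃) * u r := by positivity
    nlinarith
  · -- expansive
    intro x x'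
    have h1 := hgexp (f x) (f x')
    have h2 := hfexp x x'
    have h3 := hmaxf x x'
    set r := max (dist x x₀) (dist x' x₀) with hrdef
    have hr0 : 0 ≤ r := le_trans dist_nonneg (le_max_left _ _)
    have hur0 : 0 ≤ u r := hu0 r hr0
    have hL₂inv : L₂⁻¹ ≤ 1 := inv_le_one_of_one_le₀ hL₂
    have hL₂inv0 : 0 < L₂⁻¹ := inv_pos.2 hL₂0
    have hLL : (L₁ * L₂)⁻¹ = L₁⁻¹ * L₂⁻¹ := by rw [mul_inv]
    rw [hLL]
    have h4 : L₁⁻¹ * dist x x' ≤ dist (f x) (f x') + c₁ * u r := by linarith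
    have h5 : L₂⁻¹ * (L₁⁻¹ * dist x x') ≤ L₂⁻¹ * (dist (f x) (f x') + c₁ * u r) :=
      mul_le_mul_of_nonneg_left h4 hL₂inv0.le
    have hB : c₂ * u (max (dist (f x) y₀) (dist (f x') y₀)) ≤ c₂ * (K₁ * u r) :=
      mul_le_mul_of_nonneg_left h3 hc₂
    have h6 : L₂⁻¹ * dist (f x) (f x')
        ≤ dist (g (f x)) (g (f x')) + c₂ * (K₁ * u r) := by linarith
    have h7 : L₂⁻¹ * (c₁ * u r) ≤ 1 * (c₁ * u r) :=
      mul_le_mul_of_nonneg_right hL₂inv (by positivity)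
    have h8 : 0 ≤ (L₂ - 1) * (c₁ * u r) :=
      mul_nonneg (by linarith) (by positivity)
    have hextra : 0 ≤ (c₂ + L₂ * c₁ * K₂ + c₂ * K₃) * u r := by positivity
    nlinarith
  · -- surjectivity
    intro z
    obtain ⟨y, hy⟩ := hgsurj z
    obtain ⟨x, hx⟩ := hfsurj y
    set rz := dist z z₀ with hrz
    have hrz0 : 0 ≤ rz := dist_nonneg
    have hurz0 : 0 ≤ u rz := hu0 rz hrz0
    have hurz1 : 1 ≤ u rz := hu1 rz hrz0
    set ry := dist y y₀ with hry
    have hry0 : 0 ≤ ry := dist_nonneg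
    have hury0 : 0 ≤ u ry := hu0 ry hry0
    -- bound on ry
    have hgy : dist (g y) z₀ ≤ c₂ * u rz + rz := by
      calc dist (g y) z₀ ≤ dist (g y) z + dist z z₀ := dist_triangle _ _ _
        _ = dist z (g y) + rz := by rw [dist_comm]
        _ ≤ c₂ * u rz + rz := by linarith
    have hexp : L₂⁻¹ * ry - c₂ * u ry ≤ dist (g y) z₀ := by
      have h := hgexp y y₀
      rw [dist_self, max_eq_left dist_nonneg] at h
      rw [hz₀]
      exact h
    have hrybound : ry ≤ 2 * L₂ * rz + (2 * L₂ * c₂ + R) * u rz := by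
      by_cases hcase : R ≤ ry
      · have h1 : 2 * L₂ * (c₂ + 1) * u ry ≤ ry := hR ry hcase
        have h2 : L₂⁻¹ * ry - c₂ * u ry ≤ c₂ * u rz + rz := le_trans hexp hgy
        have h3 : L₂ * (L₂⁻¹ * ry) = ry := by field_simp
        have h4 : L₂ * (L₂⁻¹ * ry) - L₂ * (c₂ * u ry) ≤ L₂ * (c₂ * u rz + rz) := by
          rw [← mul_sub]
          exact mul_le_mul_of_nonneg_left h2 hL₂0.le
        rw [h3] at h4
        nlinarith [mul_nonneg hL₂0.le hury0, mul_nonneg hR0 hurz0]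
      · push_neg at hcase
        have h1 : ry ≤ R * u rz := by nlinarith [mul_le_mul_of_nonneg_left hurz1 hR0]
        nlinarith [mul_nonneg (mul_nonneg (by linarith : (0:ℝ) ≤ 2 * L₂) hc₂) hurz0,
          mul_nonneg (by linarith : (0:ℝ) ≤ 2 * L₂) hrz0]
    have hury : u ry ≤ K₂ * u rz := hK₂ rz ry hrz0 hry0 hrybound
    have hyfx : dist y (f x) ≤ c₁ * (K₂ * u rz) := by
      calc dist y (f x) ≤ c₁ * u ry := hx
        _ ≤ c₁ * (K₂ * u rz) := mul_le_mul_of_nonneg_left hury hc₁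
    have hfx : dist (f x) y₀ ≤ dist y (f x) + ry := by
      calc dist (f x) y₀ ≤ dist (f x) y + dist y y₀ := dist_triangle _ _ _
        _ = dist y (f x) + ry := by rw [dist_comm]
    have hmaxb : max ry (dist (f x) y₀)
        ≤ 2 * L₂ * rz + (2 * L₂ * c₂ + R + c₁ * K₂) * u rz := by
      refine max_le ?_ ?_
      · nlinarith [mul_nonneg (mul_nonneg hc₁ hK₂0) hurz0]
      · nlinarith [mul_nonneg (mul_nonneg hc₁ hK₂0) hurz0]
    have humax : u (max ry (dist (f x) y₀)) ≤ K₃ * u rz :=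
      hK₃ rz _ hrz0 (le_trans hry0 (le_max_left _ _)) hmaxb
    have hglip' := hglip y (f x)
    refine ⟨x, ?_⟩
    have hstep : dist z (g (f x)) ≤ dist z (g y) + dist (g y) (g (f x)) :=
      dist_triangle _ _ _
    have h1 : L₂ * dist y (f x) ≤ L₂ * (c₁ * (K₂ * u rz)) :=
      mul_le_mul_of_nonneg_left hyfx hL₂0.le
    have h2 : c₂ * u (max ry (dist (f x) y₀)) ≤ c₂ * (K₃ * u rz) :=
      mul_le_mul_of_nonneg_left humax hc₂
    have hextra : 0 ≤ (L₂ * c₁ + c₂ * K₁) * u rz := by positivity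
    nlinarith
end

section
/- Let u : ℝ≥0 → ℝ≥0 be nondecreasing, doubling, sublinear and satisfy u(r) ≥ 1 for all r. Let f : (X,x₀) → (Y,y₀) be a map between pointed metric spaces that is (L, c·u, x₀)-Lipschitz, (L, c·u, x₀)-expansive and (c·u, y₀)-surjective, with L ≥ 1 and c ≥ 0. Let g : X → Y be O(u)-close to f, i.e. there is c' ≥ 0 with d(f x, g x) ≤ c'·u(|x|) for all x ∈ X. Then there exists c'' ≥ 0 such that g is (L, c''·u, x₀)-Lipschitz, (L, c''·u, x₀)-expansive and (c''·u, y₀)-surjective. (Any map sublinearly close to an O(u)-bilipschitz equivalence is itself an O(u)-bilipschitz equivalence with the same multiplicative constant.) -/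
open Filter Topology

set_option maxHeartbeats 1000000 in
/-- Any map `O(u)`-close to an `O(u)`-bilipschitz equivalence is
itself an `O(u)`-bilipschitz equivalence, with the same multiplicative
constant. -/
theorem sbe_close_to_sbe
    {X Y : Type*} [MetricSpace X] [MetricSpace Y]
    (u : ℝ → ℝ)
    (humono : MonotoneOn u (Set.Ici 0))
    (hudbl : ∃ C, 1 ≤ C ∧ ∀ r, 0 ≤ r → u (2 * r) ≤ C * u r)
    (husub : Tendsto (fun r => u r / r) atTop (𝓝 0))
    (hu1 : ∀ r, 0 ≤ r → 1 ≤ u r)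
    (x₀ : X) (y₀ : Y) (f : X → Y)
    (L c : ℝ) (hL : 1 ≤ L) (hc : 0 ≤ c)
    (hflip : ∀ x x', dist (f x) (f x')
      ≤ L * dist x x' + c * u (max (dist x x₀) (dist x' x₀)))
    (hfexp : ∀ x x', L⁻¹ * dist x x' - c * u (max (dist x x₀) (dist x' x₀))
      ≤ dist (f x) (f x'))
    (hfsurj : ∀ y : Y, ∃ x : X, dist y (f x) ≤ c * u (dist y y₀))
    (g : X → Y) (c' : ℝ) (hc' : 0 ≤ c')
    (hclose : ∀ x, dist (f x) (g x) ≤ c' * u (dist x x₀)) :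
    ∃ c'' : ℝ, 0 ≤ c'' ∧
      (∀ x x', dist (g x) (g x')
        ≤ L * dist x x' + c'' * u (max (dist x x₀) (dist x' x₀))) ∧
      (∀ x x', L⁻¹ * dist x x' - c'' * u (max (dist x x₀) (dist x' x₀))
        ≤ dist (g x) (g x')) ∧
      (∀ y : Y, ∃ x : X, dist y (g x) ≤ c'' * u (dist y y₀)) := by
  obtain ⟨C, hC1, hCdbl⟩ := hudbl
  have hC0 : (0:ℝ) ≤ C := le_trans zero_le_one hC1
  have hu0 : ∀ r, 0 ≤ r → 0 ≤ u r := fun r hr => le_trans zero_le_one (hu1 r hr)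
  have hL0 : (0:ℝ) < L := lt_of_lt_of_le one_pos hL
  -- doubling iterate
  have hiter : ∀ n : ℕ, ∀ r, 0 ≤ r → u (2 ^ n * r) ≤ C ^ n * u r := by
    intro n
    induction n with
    | zero => intro r hr; simp
    | succ n ih =>
      intro r hr
      have h1 : (2:ℝ) ^ (n+1) * r = 2 * (2 ^ n * r) := by ring
      rw [h1]
      calc u (2 * (2 ^ n * r)) ≤ C * u (2 ^ n * r) := hCdbl _ (by positivity)
        _ ≤ C * (C ^ n * u r) := by
            exact mul_le_mul_of_nonneg_left (ih r hr) hC0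
        _ = C ^ (n+1) * u r := by ring
  -- sublinear bound
  obtain ⟨R, hR1, hRbound⟩ : ∃ R, 1 ≤ R ∧ ∀ r, R ≤ r → c * u r ≤ r / (2 * L) := by
    have hε : (0:ℝ) < 1 / (2 * L * (c + 1)) := by positivity
    have hev := husub.eventually (gt_mem_nhds hε)
    obtain ⟨R0, hR0⟩ := eventually_atTop.mp hev
    refine ⟨max R0 1, le_max_right _ _, ?_⟩
    intro r hr
    have hrpos : (0:ℝ) < r := lt_of_lt_of_le one_pos (le_trans (le_max_right _ _) hr)
    have h := hR0 r (le_trans (le_max_left _ _) hr)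
    have h2 : u r < 1 / (2 * L * (c + 1)) * r := (div_lt_iff₀ hrpos).mp h
    have h3 : c * u r ≤ c * (1 / (2 * L * (c + 1)) * r) :=
      mul_le_mul_of_nonneg_left h2.le hc
    have h4 : c * (1 / (2 * L * (c + 1)) * r) ≤ r / (2 * L) := by
      have he : c * (1 / (2 * L * (c + 1)) * r) = (c * r) / (2 * L * (c + 1)) := by ring
      rw [he, div_le_div_iff₀ (by positivity) (by positivity)]
      nlinarith [mul_nonneg hrpos.le hL0.le]
    linarith [h4]
  have hR0' : (0:ℝ) ≤ R := le_trans zero_le_one hR1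
  -- global sublinear bound
  have hsub2 : ∀ s, 0 ≤ s → c * u s ≤ s / (2 * L) + c * u R := by
    intro s hs
    rcases le_total R s with h | h
    · have h1 := hRbound s h
      have h2 : 0 ≤ c * u R := mul_nonneg hc (hu0 R hR0')
      linarith
    · have h1 : u s ≤ u R := humono hs hR0' h
      have h2 : c * u s ≤ c * u R := mul_le_mul_of_nonneg_left h1 hc
      have h3 : (0:ℝ) ≤ s / (2 * L) := by positivity
      linarith
  obtain ⟨D, hD⟩ : ∃ D : ℝ, D = dist (f x₀) y₀ := ⟨_, rfl⟩
  have hD0 : 0 ≤ D := hD ▸ dist_nonneg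
  obtain ⟨M, hM⟩ : ∃ M : ℝ, M = D + 2 * (c * u R) := ⟨_, rfl⟩
  have hM0 : 0 ≤ M := by
    have h1 := mul_nonneg hc (hu0 R hR0')
    rw [hD] at hM
    have h2 : (0:ℝ) ≤ dist (f x₀) y₀ := dist_nonneg
    linarith [hM.le, hM.ge]
  obtain ⟨m, hm⟩ : ∃ m : ℕ, 4 * L + 2 * L * M < 2 ^ m :=
    pow_unbounded_of_one_lt (4 * L + 2 * L * M) one_lt_two
  obtain ⟨K, hK⟩ : ∃ K : ℝ, K = C ^ m * u 1 := ⟨_, rfl⟩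
  have hK0 : 0 ≤ K := hK ▸ mul_nonneg (pow_nonneg hC0 m) (hu0 1 zero_le_one)
  refine ⟨c + 2 * c' + c' * K, by positivity, ?_, ?_, ?_⟩
  · intro x x'
    have hmax0 : 0 ≤ max (dist x x₀) (dist x' x₀) :=
      le_trans dist_nonneg (le_max_left _ _)
    have h1 : u (dist x x₀) ≤ u (max (dist x x₀) (dist x' x₀)) :=
      humono dist_nonneg hmax0 (le_max_left _ _)
    have h2 : u (dist x' x₀) ≤ u (max (dist x x₀) (dist x' x₀)) :=
      humono dist_nonneg hmax0 (le_max_right _ _)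
    have h3 : dist (g x) (g x') ≤ dist (g x) (f x) + dist (f x) (f x') + dist (f x') (g x') :=
      dist_triangle4 _ _ _ _
    have h4 := hflip x x'
    have h5 := hclose x
    have h6 := hclose x'
    have h7 : 0 ≤ u (max (dist x x₀) (dist x' x₀)) := hu0 _ hmax0
    rw [dist_comm (g x) (f x)] at h3
    nlinarith [mul_le_mul_of_nonneg_left h1 hc', mul_le_mul_of_nonneg_left h2 hc',
      mul_nonneg (mul_nonneg hc' hK0) h7]
  · intro x x'
    have hmax0 : 0 ≤ max (dist x x₀) (dist x' x₀) :=
      le_trans dist_nonneg (le_max_left _ _)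
    have h1 : u (dist x x₀) ≤ u (max (dist x x₀) (dist x' x₀)) :=
      humono dist_nonneg hmax0 (le_max_left _ _)
    have h2 : u (dist x' x₀) ≤ u (max (dist x x₀) (dist x' x₀)) :=
      humono dist_nonneg hmax0 (le_max_right _ _)
    have h3 : dist (f x) (f x') ≤ dist (f x) (g x) + dist (g x) (g x') + dist (g x') (f x') :=
      dist_triangle4 _ _ _ _
    have h4 := hfexp x x'
    have h5 := hclose x
    have h6 := hclose x'
    have h7 : 0 ≤ u (max (dist x x₀) (dist x' x₀)) := hu0 _ hmax0
    rw [dist_comm (g x') (f x')] at h3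
    nlinarith [mul_le_mul_of_nonneg_left h1 hc', mul_le_mul_of_nonneg_left h2 hc',
      mul_nonneg (mul_nonneg hc' hK0) h7]
  · intro y
    obtain ⟨x, hx⟩ := hfsurj y
    have ha0 : (0:ℝ) ≤ dist x x₀ := dist_nonneg
    have hy0 : (0:ℝ) ≤ dist y y₀ := dist_nonneg
    have huy0 : (0:ℝ) ≤ u (dist y y₀) := hu0 _ hy0
    -- bound on dist x x₀
    have hexp := hfexp x x₀
    rw [dist_self, max_eq_left ha0] at hexp
    have htri : dist (f x) (f x₀) ≤ dist (f x) y + dist y y₀ + dist y₀ (f x₀) :=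
      dist_triangle4 _ _ _ _
    rw [dist_comm (f x) y, dist_comm y₀ (f x₀)] at htri
    have hs1 := hsub2 (dist x x₀) ha0
    have hs2 := hsub2 (dist y y₀) hy0
    have hyL : dist y y₀ / (2 * L) ≤ dist y y₀ := by
      rw [div_le_iff₀ (by positivity)]
      nlinarith
    have hinva : L⁻¹ * dist x x₀ = dist x x₀ / L := by field_simp
    have hhalf : dist x x₀ / L - dist x x₀ / (2 * L) = dist x x₀ / (2 * L) := by
      field_simp; ring
    have haM : dist x x₀ / (2 * L) ≤ 2 * dist y y₀ + M := by
      rw [hinva] at hexp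
      linarith [hexp, htri, hx, hs1, hs2, hyL, hhalf]
    have habound : dist x x₀ ≤ 4 * L * dist y y₀ + 2 * L * M := by
      have := (div_le_iff₀ (by positivity : (0:ℝ) < 2 * L)).mp haM
      nlinarith
    have hmax1 : (0:ℝ) ≤ max (dist y y₀) 1 := le_trans zero_le_one (le_max_right _ _)
    have hab2 : dist x x₀ ≤ 2 ^ m * max (dist y y₀) 1 := by
      have h1 : 4 * L * dist y y₀ + 2 * L * M ≤ (4 * L + 2 * L * M) * max (dist y y₀) 1 := by
        have hy1 : dist y y₀ ≤ max (dist y y₀) 1 := le_max_left _ _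
        have h11 : (1:ℝ) ≤ max (dist y y₀) 1 := le_max_right _ _
        have e1 : (4 * L + 2 * L * M) * max (dist y y₀) 1
            = 4 * L * max (dist y y₀) 1 + (2 * L * M) * max (dist y y₀) 1 := by ring
        have e2 : 4 * L * dist y y₀ ≤ 4 * L * max (dist y y₀) 1 :=
          mul_le_mul_of_nonneg_left hy1 (by positivity)
        have hLM : (0:ℝ) ≤ 2 * L * M := mul_nonneg (mul_nonneg two_pos.le hL0.le) hM0
        have e3 : 2 * L * M ≤ (2 * L * M) * max (dist y y₀) 1 :=
          le_mul_of_one_le_right hLM h11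
        linarith
      have h2 : (4 * L + 2 * L * M) * max (dist y y₀) 1 ≤ 2 ^ m * max (dist y y₀) 1 :=
        mul_le_mul_of_nonneg_right hm.le hmax1
      linarith
    have hua : u (dist x x₀) ≤ K * u (dist y y₀) := by
      have h1 : u (dist x x₀) ≤ u (2 ^ m * max (dist y y₀) 1) :=
        humono ha0 (mul_nonneg (pow_nonneg two_pos.le m) hmax1) hab2
      have h2 : u (2 ^ m * max (dist y y₀) 1) ≤ C ^ m * u (max (dist y y₀) 1) :=
        hiter m _ hmax1
      have h3 : u (max (dist y y₀) 1) ≤ u 1 * u (dist y y₀) := by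
        rcases le_total 1 (dist y y₀) with h | h
        · rw [max_eq_left h]
          nlinarith [hu1 1 zero_le_one]
        · rw [max_eq_right h]
          nlinarith [hu1 (dist y y₀) hy0, hu0 1 zero_le_one]
      calc u (dist x x₀) ≤ C ^ m * u (max (dist y y₀) 1) := le_trans h1 h2
        _ ≤ C ^ m * (u 1 * u (dist y y₀)) :=
            mul_le_mul_of_nonneg_left h3 (pow_nonneg hC0 m)
        _ = K * u (dist y y₀) := by rw [hK]; ring
    refine ⟨x, ?_⟩
    have htri2 : dist y (g x) ≤ dist y (f x) + dist (f x) (g x) := dist_triangle _ _ _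
    have hcl := hclose x
    nlinarith [mul_le_mul_of_nonneg_left hua hc', mul_nonneg hc' huy0]
end

section
/- Let u : ℝ≥0 → ℝ≥0 be nondecreasing and sublinear, let L ≥ 1 and c ≥ 0, and let f : (X,x₀) → (Y,y₀) be a map between pointed metric spaces that is (L, c·u, x₀)-Lipschitz and (L, c·u, x₀)-expansive, with d(f(x₀), y₀) ≤ c·u(0). Then for every L' > L there exists R ≥ 0 such that: for all x ∈ X and y ∈ Y with d(f x, y) ≤ c·u(|y|) and |y| ≥ R, one has (1/L')·|y| ≤ |x| ≤ L'·|y|, where |x| = d(x,x₀) and |y| = d(y,y₀). (If a point y is sublinearly close to the image of x under a sublinear bilipschitz embedding, then the sizes of x and y are comparable up to any factor L' > L once |y| is large enough.) -/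
open Filter Topology

/-- If `y` is sublinearly close to the image of `x` under a
sublinear bilipschitz embedding `f`, then the sizes of `x` and `y` are
comparable up to any factor `L' > L` once `|y|` is large enough. -/
theorem sbe_preimage_size_comparable
    {X Y : Type*} [MetricSpace X] [MetricSpace Y]
    (u : ℝ → ℝ)
    (hu0 : ∀ r, 0 ≤ r → 0 ≤ u r)
    (humono : MonotoneOn u (Set.Ici 0))
    (husub : Tendsto (fun r => u r / r) atTop (𝓝 0))
    (L c : ℝ) (hL : 1 ≤ L) (hc : 0 ≤ c)
    (x₀ : X) (y₀ : Y) (f : X → Y)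
    (hflip : ∀ x x', dist (f x) (f x')
      ≤ L * dist x x' + c * u (max (dist x x₀) (dist x' x₀)))
    (hfexp : ∀ x x', L⁻¹ * dist x x' - c * u (max (dist x x₀) (dist x' x₀))
      ≤ dist (f x) (f x'))
    (hbase : dist (f x₀) y₀ ≤ c * u 0) :
    ∀ L' : ℝ, L < L' → ∃ R : ℝ, 0 ≤ R ∧ ∀ (x : X) (y : Y),
      dist (f x) y ≤ c * u (dist y y₀) → R ≤ dist y y₀ →
      (1 / L') * dist y y₀ ≤ dist x x₀ ∧ dist x x₀ ≤ L' * dist y y₀ := by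
  intro L' hL'
  have hL0 : (0:ℝ) < L := lt_of_lt_of_le one_pos hL
  have hL'0 : (0:ℝ) < L' := hL0.trans hL'
  set ε : ℝ := (L' - L) / L' with hεdef
  clear_value ε
  have hε0 : 0 < ε := by rw [hεdef]; exact div_pos (by linarith) hL'0
  set A : ℝ := 2 * L + 1 with hAdef
  clear_value A
  have hA1 : (1:ℝ) ≤ A := by rw [hAdef]; linarith
  have hA0 : (0:ℝ) < A := lt_of_lt_of_le one_pos hA1
  set ε' : ℝ := ε / (2 * A) with hε'def
  clear_value ε'
  have hε'0 : 0 < ε' := by rw [hε'def]; exact div_pos hε0 (by linarith)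
  -- threshold for L*c*u r ≤ r/2
  have t1 : Tendsto (fun r => L * c * (u r / r)) atTop (𝓝 0) := by
    simpa using husub.const_mul (L * c)
  obtain ⟨R₀, hR₀⟩ :=
    eventually_atTop.1 (t1.eventually_lt_const (by norm_num : (0:ℝ) < 1/2))
  set S₀ : ℝ := max R₀ 1 with hS₀def
  clear_value S₀
  have hS₀ : ∀ r, S₀ ≤ r → L * c * u r ≤ r / 2 := by
    intro r hr
    rw [hS₀def] at hr
    have hr1 : (1:ℝ) ≤ r := le_trans (le_max_right _ _) hr
    have hr0 : (0:ℝ) < r := lt_of_lt_of_le one_pos hr1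
    have h := hR₀ r (le_trans (le_max_left _ _) hr)
    rw [mul_div_assoc'] at h
    have := (div_lt_iff₀ hr0).mp h
    linarith
  have hS₀1 : (1:ℝ) ≤ S₀ := hS₀def ▸ le_max_right _ _
  -- threshold for 3*c*u r ≤ ε' * r
  have t2 : Tendsto (fun r => 3 * c * (u r / r)) atTop (𝓝 0) := by
    simpa using husub.const_mul (3 * c)
  obtain ⟨R₁, hR₁⟩ := eventually_atTop.1 (t2.eventually_lt_const hε'0)
  set S₁ : ℝ := max R₁ 1 with hS₁def
  clear_value S₁
  have hS₁ : ∀ r, S₁ ≤ r → 3 * c * u r ≤ ε' * r := by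
    intro r hr
    rw [hS₁def] at hr
    have hr1 : (1:ℝ) ≤ r := le_trans (le_max_right _ _) hr
    have hr0 : (0:ℝ) < r := lt_of_lt_of_le one_pos hr1
    have h := hR₁ r (le_trans (le_max_left _ _) hr)
    rw [mul_div_assoc'] at h
    have := (div_lt_iff₀ hr0).mp h
    linarith
  have hu0' : 0 ≤ u 0 := hu0 0 le_rfl
  set C : ℝ := 2 * L * c * u 0 + S₀ with hCdef
  clear_value C
  have hC0 : (0:ℝ) ≤ C := by
    rw [hCdef]
    have : 0 ≤ 2 * L * c * u 0 := by positivity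
    linarith
  refine ⟨max S₀ (max S₁ C),
    le_trans (le_trans zero_le_one hS₀1) (le_max_left _ _), ?_⟩
  intro x y hxy hyR
  set a := dist x x₀ with hadef
  clear_value a
  set b := dist y y₀ with hbdef
  clear_value b
  have ha0 : 0 ≤ a := by rw [hadef]; exact dist_nonneg
  have hb0 : 0 ≤ b := by rw [hbdef]; exact dist_nonneg
  have hua : 0 ≤ u a := hu0 a ha0
  have hub : 0 ≤ u b := hu0 b hb0
  have hbS₀ : S₀ ≤ b := le_trans (le_max_left _ _) hyR
  have hbS₁ : S₁ ≤ b := le_trans (le_trans (le_max_left _ _) (le_max_right _ _)) hyR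
  have hbC : C ≤ b := le_trans (le_trans (le_max_right _ _) (le_max_right _ _)) hyR
  -- key distance inequalities
  have key1 : dist (f x) (f x₀) ≤ L * a + c * u a := by
    have h := hflip x x₀
    rw [dist_self, ← hadef, max_eq_left ha0] at h
    exact h
  have key2 : L⁻¹ * a - c * u a ≤ dist (f x) (f x₀) := by
    have h := hfexp x x₀
    rw [dist_self, ← hadef, max_eq_left ha0] at h
    exact h
  have hstar : b ≤ L * a + c * u a + c * u 0 + c * u b := by
    have d1 : dist y y₀ ≤ dist y (f x) + dist (f x) y₀ := dist_triangle _ _ _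
    have d2 : dist (f x) y₀ ≤ dist (f x) (f x₀) + dist (f x₀) y₀ := dist_triangle _ _ _
    have d3 : dist y (f x) = dist (f x) y := dist_comm _ _
    rw [← hbdef] at d1
    linarith [key1, hbase, hxy]
  have hdstar : L⁻¹ * a - c * u a ≤ c * u b + b + c * u 0 := by
    have d1 : dist (f x) (f x₀) ≤ dist (f x) y + dist y (f x₀) := dist_triangle _ _ _
    have d2 : dist y (f x₀) ≤ dist y y₀ + dist y₀ (f x₀) := dist_triangle _ _ _
    have d3 : dist y₀ (f x₀) = dist (f x₀) y₀ := dist_comm _ _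
    rw [← hbdef] at d2
    linarith [key2, hbase, hxy]
  have ha_le : a ≤ L * (b + c * u b + c * u a + c * u 0) := by
    have h' : L⁻¹ * a ≤ b + c * u b + c * u a + c * u 0 := by linarith
    calc a = L * (L⁻¹ * a) := by field_simp
      _ ≤ L * (b + c * u b + c * u a + c * u 0) :=
        mul_le_mul_of_nonneg_left h' (le_of_lt hL0)
  -- crude bound on a
  have hbAb : b ≤ A * b := by
    have := mul_le_mul_of_nonneg_right hA1 hb0
    linarith
  have hcrude : a ≤ A * b + C := by
    rcases le_or_gt a S₀ with h | h
    · have h20 : 0 ≤ 2 * L * c * u 0 := by positivity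
      have h1 : a ≤ C := by rw [hCdef]; linarith
      have h2 : 0 ≤ A * b := mul_nonneg hA0.le hb0
      linarith
    · have h1 := hS₀ a h.le
      have h2 := hS₀ b hbS₀
      have hS₀0 : (0:ℝ) ≤ S₀ := by linarith
      rw [hAdef, hCdef]
      linarith [ha_le]
  set M : ℝ := A * b + C with hMdef
  clear_value M
  have hM0 : 0 ≤ M := by rw [hMdef]; linarith [mul_nonneg hA0.le hb0]
  have huaM : u a ≤ u M := humono (Set.mem_Ici.2 ha0) (Set.mem_Ici.2 hM0) hcrude
  have hubM : u b ≤ u M := by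
    refine humono (Set.mem_Ici.2 hb0) (Set.mem_Ici.2 hM0) ?_
    rw [hMdef]; linarith
  have hu0M : u 0 ≤ u M := humono (Set.mem_Ici.2 le_rfl) (Set.mem_Ici.2 hM0) hM0
  have hMS₁ : S₁ ≤ M := by rw [hMdef]; linarith
  have hkey : 3 * c * u M ≤ ε' * M := hS₁ M hMS₁
  have hε'A : ε' * A = ε / 2 := by
    rw [hε'def]; field_simp
  have hε'half : ε' ≤ ε / 2 := by
    rw [hε'def]
    apply div_le_div_of_nonneg_left hε0.le (by norm_num)
    linarith
  have hε'C : ε' * C ≤ (ε / 2) * b :=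
    le_trans (mul_le_mul_of_nonneg_right hε'half hC0)
      (mul_le_mul_of_nonneg_left hbC (by linarith))
  have hMeq : ε' * M = (ε / 2) * b + ε' * C := by
    rw [hMdef, mul_add, ← mul_assoc, hε'A]
  have hsum : c * u a + c * u b + c * u 0 ≤ ε * b := by
    have h1 : c * u a ≤ c * u M := mul_le_mul_of_nonneg_left huaM hc
    have h2 : c * u b ≤ c * u M := mul_le_mul_of_nonneg_left hubM hc
    have h3 : c * u 0 ≤ c * u M := mul_le_mul_of_nonneg_left hu0M hc
    linarith [hkey, hMeq, hε'C]
  have hεL' : ε * L' = L' - L := by rw [hεdef]; exact div_mul_cancel₀ _ (ne_of_gt hL'0)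
  have h6 : ε * L' * b = (L' - L) * b := by rw [hεL']
  constructor
  · -- (1/L') * b ≤ a
    have hcomb : b ≤ L * a + ε * b := by linarith
    have h4 := mul_le_mul_of_nonneg_left hcomb hL'0.le
    have h5 : L * b ≤ L * (L' * a) := by linarith only [h4, h6]
    have hb' : b ≤ L' * a := le_of_mul_le_mul_left h5 hL0
    rw [one_div]
    exact (inv_mul_le_iff₀ hL'0).mpr hb'
  · -- a ≤ L' * b
    have h1 : L * (c * u b + c * u a + c * u 0) ≤ L * (ε * b) :=
      mul_le_mul_of_nonneg_left (by linarith) hL0.le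
    have h2 : (L * ε) * b ≤ (L' * ε) * b := by
      apply mul_le_mul_of_nonneg_right _ hb0
      exact mul_le_mul_of_nonneg_right hL'.le hε0.le
    linarith [ha_le, h1, h2, h6]
end
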